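/- Fix an integer t ≥ 2 and let n ≥ 1. For every integer m with 1 ≤ m < N_{n+1} one has Ψ_t(m)/m ≤ Ψ_t(N_n)/N_n, with equality if and only if N_n divides m. -/

import Mathlib

open Finset Filter

/-- Generalized Dedekind psi function `Ψ_t(n) = n ∏_{p ∣ n} (1 + 1/p + ⋯ + 1/p^(t-1))`. -/
noncomputable def Psi (t n : ℕ) : ℝ :=
  (n : ℝ) * ∏ p ∈ n.primeFactors, ∑ i ∈ Finset.range t, (1 : ℝ) / (p : ℝ) ^ i

/-- The primorial `N_n = ∏_{k=1}^n p_k`, the product of the first `n` primes. -/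
noncomputable def primorialAt (n : ℕ) : ℕ := ∏ k ∈ Finset.range n, Nat.nth Nat.Prime k

/-- The `n`-th prime `p_n` (so `nthPrime 1 = 2`). -/
noncomputable def nthPrime (n : ℕ) : ℕ := Nat.nth Nat.Prime (n - 1)

/-- The ratio `R_t(x) = Ψ_t(x) / (x log log x)`. -/
noncomputable def Rt (t n : ℕ) : ℝ := Psi t n / ((n : ℝ) * Real.log (Real.log n))

/-- The Riemann zeta value `ζ(t) = ∑_{n ≥ 1} n^{-t}` at an integer argument. -/
noncomputable def zetaNat (t : ℕ) : ℝ := ∑' k : ℕ, 1 / ((k : ℝ) + 1) ^ t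

/-!
`Ψ_t(m)/m = ∏_{p ∣ m} (1 + 1/p + ⋯ + 1/p^(t-1))` depends only on the set `S` of primes dividing
`m`, and for `t ≥ 2` each factor exceeds `1` and strictly decreases in `p`. Since `k` distinct
primes multiply to at least `N_k`, `m < N_{n+1}` forces `#S ≤ n`; and the `i`-th smallest
element of `S` is at least `p_i`. Hence the product over `S` is at most the product over the
first `n` primes, with equality exactly when `S` is that set, i.e. when `N_n ∣ m`.
-/

section Nth

variable {p : ℕ → Prop} [DecidablePred p]

theorem Nat.nth_card_le_of_forall_lt {s : Finset ℕ} {a : ℕ} (hs : ∀ x ∈ s, p x)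
    (hsa : ∀ x ∈ s, x < a) (ha : p a) : Nat.nth p s.card ≤ a := by
  refine Nat.lt_succ_iff.1 (Nat.nth_lt_of_lt_count ?_)
  have has : a ∉ s := fun h => (hsa a h).false
  rw [Nat.count_eq_card_filter_range, Nat.lt_iff_add_one_le, ← card_insert_of_notMem has]
  refine card_le_card fun x hx => ?_
  rcases mem_insert.1 hx with rfl | hx
  · simp [ha]
  · simp [hs x hx, (hsa x hx).trans (Nat.lt_succ_self a)]

theorem Finset.prod_range_nth_le_prod {R : Type*} [CommSemiring R] [PartialOrder R]
    [IsOrderedRing R] (hp : (Set.ofPred p).Infinite) {g : ℕ → R} (hg0 : ∀ x, p x → 0 ≤ g x)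
    (hg : MonotoneOn g (Set.ofPred p)) (S : Finset ℕ) (hS : ∀ x ∈ S, p x) :
    ∏ i ∈ range S.card, g (Nat.nth p i) ≤ ∏ x ∈ S, g x := by
  induction S using Finset.induction_on_max with
  | empty => simp
  | insert a s hsa ih =>
    have has : a ∉ s := fun h => (hsa a h).false
    have hs : ∀ x ∈ s, p x := fun x hx => hS x (mem_insert_of_mem hx)
    have ha : p a := hS a (mem_insert_self a s)
    rw [card_insert_of_notMem has, prod_range_succ, prod_insert has, mul_comm (g a)]
    exact mul_le_mul (ih hs) (hg (Nat.nth_mem_of_infinite hp _) ha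
      (Nat.nth_card_le_of_forall_lt hs hsa ha)) (hg0 _ (Nat.nth_mem_of_infinite hp _))
      (prod_nonneg fun x hx => hg0 x (hs x hx))

theorem Finset.prod_lt_prod_range_nth {R : Type*} [CommSemiring R] [LinearOrder R]
    [IsStrictOrderedRing R] (hp : (Set.ofPred p).Infinite) {g : ℕ → R} (hg0 : ∀ x, p x → 0 < g x)
    (hg : StrictAntiOn g (Set.ofPred p)) (S : Finset ℕ) (hS : ∀ x ∈ S, p x)
    (hne : S ≠ (range S.card).image (Nat.nth p)) :
    ∏ x ∈ S, g x < ∏ i ∈ range S.card, g (Nat.nth p i) := by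
  induction S using Finset.induction_on_max with
  | empty => simp at hne
  | insert a s hsa ih =>
    have has : a ∉ s := fun h => (hsa a h).false
    have hs : ∀ x ∈ s, p x := fun x hx => hS x (mem_insert_of_mem hx)
    have ha : p a := hS a (mem_insert_self a s)
    have hle : Nat.nth p s.card ≤ a := Nat.nth_card_le_of_forall_lt hs hsa ha
    have hnth : p (Nat.nth p s.card) := Nat.nth_mem_of_infinite hp _
    rw [card_insert_of_notMem has, prod_range_succ, prod_insert has, mul_comm (g a)]
    rw [card_insert_of_notMem has, range_add_one, image_insert] at hne
    by_cases hs_eq : s = (range s.card).image (Nat.nth p)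
    · have hlt : Nat.nth p s.card < a := hle.lt_of_ne fun h => hne (by rw [h, ← hs_eq])
      have hprod : ∏ x ∈ s, g x = ∏ i ∈ range s.card, g (Nat.nth p i) := by
        conv_lhs => rw [hs_eq]
        exact prod_image fun i _ j _ hij => Nat.nth_injective hp hij
      rw [hprod]
      exact mul_lt_mul_of_pos_left (hg hnth ha hlt) (prod_pos fun i _ =>
        hg0 _ (Nat.nth_mem_of_infinite hp i))
    · exact mul_lt_mul_of_lt_of_le_of_nonneg_of_pos (ih hs hs_eq) (hg.antitoneOn hnth ha hle)
        (prod_pos fun x hx => hg0 x (hs x hx)).le (hg0 _ hnth)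

end Nth

noncomputable def psiFactor (t p : ℕ) : ℝ := ∑ i ∈ range t, (1 : ℝ) / (p : ℝ) ^ i

theorem Psi_div_self (t : ℕ) {n : ℕ} (hn : n ≠ 0) :
    Psi t n / n = ∏ p ∈ n.primeFactors, psiFactor t p :=
  mul_div_cancel_left₀ _ (Nat.cast_ne_zero.2 hn)

theorem one_lt_psiFactor {t p : ℕ} (ht : 2 ≤ t) (hp : 0 < p) : 1 < psiFactor t p := by
  have hsum : ∑ i ∈ range 2, (1 : ℝ) / (p : ℝ) ^ i ≤ psiFactor t p :=
    sum_le_sum_of_subset_of_nonneg (range_subset_range.2 ht) fun i _ _ => by positivity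
  have hp' : (0 : ℝ) < 1 / (p : ℝ) := by positivity
  simp only [sum_range_succ, sum_range_zero, pow_zero, pow_one, div_one, zero_add] at hsum
  linarith

theorem psiFactor_strictAntiOn {t : ℕ} (ht : 2 ≤ t) :
    StrictAntiOn (psiFactor t) (Set.Ioi 0) := by
  intro p hp q hq hpq
  have hp' : (0 : ℝ) < p := Nat.cast_pos.2 hp
  have hpq' : (p : ℝ) < q := Nat.cast_lt.2 hpq
  refine sum_lt_sum (fun i _ => by gcongr) ⟨1, mem_range.2 ht, ?_⟩
  simp only [pow_one]
  gcongr

noncomputable def firstPrimes (n : ℕ) : Finset ℕ := (range n).image (Nat.nth Nat.Prime)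

theorem prod_firstPrimes {M : Type*} [CommMonoid M] (n : ℕ) (g : ℕ → M) :
    ∏ p ∈ firstPrimes n, g p = ∏ k ∈ range n, g (Nat.nth Nat.Prime k) :=
  prod_image fun _ _ _ _ h => Nat.nth_injective Nat.infinite_setOfPred_prime h

theorem card_firstPrimes (n : ℕ) : (firstPrimes n).card = n := by
  rw [firstPrimes, card_image_of_injective _ (Nat.nth_injective Nat.infinite_setOfPred_prime),
    card_range]

theorem prime_of_mem_firstPrimes {n p : ℕ} (hp : p ∈ firstPrimes n) : p.Prime := by
  obtain ⟨k, -, rfl⟩ := mem_image.1 hp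
  exact Nat.nth_mem_of_infinite Nat.infinite_setOfPred_prime k

theorem primorialAt_eq_prod_firstPrimes (n : ℕ) : primorialAt n = ∏ p ∈ firstPrimes n, p :=
  (prod_firstPrimes n id).symm

theorem primeFactors_primorialAt (n : ℕ) : (primorialAt n).primeFactors = firstPrimes n := by
  rw [primorialAt_eq_prod_firstPrimes]
  exact Nat.primeFactors_prod fun _ => prime_of_mem_firstPrimes

theorem primorialAt_ne_zero (n : ℕ) : primorialAt n ≠ 0 := by
  rw [primorialAt_eq_prod_firstPrimes]
  exact prod_ne_zero_iff.2 fun _ hp => (prime_of_mem_firstPrimes hp).ne_zero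

theorem primorialAt_dvd_iff {m n : ℕ} (hm : m ≠ 0) :
    primorialAt n ∣ m ↔ firstPrimes n ⊆ m.primeFactors := by
  refine ⟨fun h => ?_, fun h => ?_⟩
  · exact primeFactors_primorialAt n ▸ Nat.primeFactors_mono h hm
  · rw [primorialAt_eq_prod_firstPrimes]
    exact (prod_dvd_prod_of_subset _ _ _ h).trans (Nat.prod_primeFactors_dvd m)

theorem card_primeFactors_le_of_lt_primorialAt {m n : ℕ} (hm : m ≠ 0)
    (h : m < primorialAt (n + 1)) : m.primeFactors.card ≤ n := by
  by_contra! hlt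
  have hmono : primorialAt (n + 1) ≤ primorialAt m.primeFactors.card :=
    prod_le_prod_of_subset_of_one_le' (range_subset_range.2 hlt) fun k _ _ =>
      (Nat.nth_mem_of_infinite Nat.infinite_setOfPred_prime k).one_lt.le
  have hfirst : primorialAt m.primeFactors.card ≤ ∏ p ∈ m.primeFactors, p :=
    prod_range_nth_le_prod Nat.infinite_setOfPred_prime (fun _ _ => Nat.zero_le _)
      monotoneOn_id _ fun _ => Nat.prime_of_mem_primeFactors
  have hrad : ∏ p ∈ m.primeFactors, p ≤ m :=
    Nat.le_of_dvd (Nat.pos_of_ne_zero hm) (Nat.prod_primeFactors_dvd m)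
  exact h.not_ge (hmono.trans (hfirst.trans hrad))

theorem prod_psiFactor_lt_prod_firstPrimes {t : ℕ} (ht : 2 ≤ t) {S : Finset ℕ}
    (hS : ∀ p ∈ S, p.Prime) {n : ℕ} (hcard : S.card ≤ n) (hne : S ≠ firstPrimes n) :
    ∏ p ∈ S, psiFactor t p < ∏ p ∈ firstPrimes n, psiFactor t p := by
  have hgt : ∀ k, 1 < psiFactor t (Nat.nth Nat.Prime k) := fun k =>
    one_lt_psiFactor ht (Nat.nth_mem_of_infinite Nat.infinite_setOfPred_prime k).pos
  have hgrow : ∀ k ≤ n, ∏ p ∈ firstPrimes k, psiFactor t p ≤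
      ∏ p ∈ firstPrimes n, psiFactor t p := fun k hk => by
    simp only [prod_firstPrimes]
    exact prod_le_prod_of_subset_of_one_le (range_subset_range.2 hk)
      (fun i _ => zero_le_one.trans (hgt i).le) fun i _ _ => (hgt i).le
  by_cases hS_eq : S = firstPrimes S.card
  · have hlt : S.card < n := hcard.lt_of_ne fun h => hne (h ▸ hS_eq)
    calc ∏ p ∈ S, psiFactor t p = ∏ p ∈ firstPrimes S.card, psiFactor t p := by
          conv_lhs => rw [hS_eq]
      _ < ∏ p ∈ firstPrimes (S.card + 1), psiFactor t p := by
          simp only [prod_firstPrimes, prod_range_succ]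
          exact lt_mul_of_one_lt_right (prod_pos fun i _ => zero_lt_one.trans (hgt i)) (hgt _)
      _ ≤ _ := hgrow _ hlt
  · calc ∏ p ∈ S, psiFactor t p < ∏ p ∈ firstPrimes S.card, psiFactor t p := by
          rw [prod_firstPrimes]
          exact prod_lt_prod_range_nth Nat.infinite_setOfPred_prime
            (fun p hp => zero_lt_one.trans (one_lt_psiFactor ht hp.pos))
            ((psiFactor_strictAntiOn ht).mono fun p hp => Nat.Prime.pos hp) S hS hS_eq
      _ ≤ _ := hgrow _ hcard

theorem psi_ratio_le_primorial_general (t n : ℕ) (ht : 2 ≤ t)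
    (m : ℕ) (hm1 : 1 ≤ m) (hm2 : m < primorialAt (n + 1)) :
    Psi t m / (m : ℝ) ≤ Psi t (primorialAt n) / (primorialAt n : ℝ) ∧
      (Psi t m / (m : ℝ) = Psi t (primorialAt n) / (primorialAt n : ℝ) ↔ primorialAt n ∣ m) := by
  have hm : m ≠ 0 := Nat.one_le_iff_ne_zero.1 hm1
  have hcard : m.primeFactors.card ≤ n := card_primeFactors_le_of_lt_primorialAt hm hm2
  rw [Psi_div_self t hm, Psi_div_self t (primorialAt_ne_zero n), primeFactors_primorialAt,
    primorialAt_dvd_iff hm]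
  by_cases hsub : firstPrimes n ⊆ m.primeFactors
  · have heq : firstPrimes n = m.primeFactors :=
      eq_of_subset_of_card_le hsub (by rwa [card_firstPrimes])
    simp [heq]
  · have hlt := prod_psiFactor_lt_prod_firstPrimes ht (fun _ => Nat.prime_of_mem_primeFactors)
      hcard fun h => hsub (h ▸ subset_refl _)
    exact ⟨hlt.le, iff_of_false hlt.ne hsub⟩

theorem psi_ratio_le_primorial (t n : ℕ) (ht : 2 ≤ t) (hn : 1 ≤ n)
    (m : ℕ) (hm1 : 1 ≤ m) (hm2 : m < primorialAt (n + 1)) :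
    Psi t m / (m : ℝ) ≤ Psi t (primorialAt n) / (primorialAt n : ℝ) ∧
      (Psi t m / (m : ℝ) = Psi t (primorialAt n) / (primorialAt n : ℝ) ↔ primorialAt n ∣ m) :=
  psi_ratio_le_primorial_general t n ht m hm1 hm2
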